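/- Let (L, R) be a modality on an ∞-topos. For a modality-cartesian square α : f → g (a square whose gap map lies in L), the square R(α) obtained by applying the functorial (L, R)-factorization is cartesian. -/
import Mathlib


open CategoryTheory Limits

universe v u

variable {C : Type u} [Category.{v} C]

/-- `l` has the unique left lifting property against `r`: every commutative
square admits a unique diagonal filler. -/
def UniqueLift {A B X Y : C} (l : A ⟶ B) (r : X ⟶ Y) : Prop :=
  ∀ (u : A ⟶ X) (v : B ⟶ Y), u ≫ r = l ≫ v →
    ∃! d : B ⟶ X, l ≫ d = u ∧ d ≫ r = v

/-- An (orthogonal) factorization system `(L, R)` on a category `C`. -/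
structure OrthFactSystem (C : Type u) [Category.{v} C] where
  L : MorphismProperty C
  R : MorphismProperty C
  fact : ∀ {X Y : C} (f : X ⟶ Y),
    ∃ (Z : C) (l : X ⟶ Z) (r : Z ⟶ Y), L l ∧ R r ∧ l ≫ r = f
  lift : ∀ {A B X Y : C} (l : A ⟶ B) (r : X ⟶ Y), L l → R r → UniqueLift l r
  mem_L : ∀ {A B : C} (l : A ⟶ B),
    (∀ {X Y : C} (r : X ⟶ Y), R r → UniqueLift l r) → L l
  mem_R : ∀ {X Y : C} (r : X ⟶ Y),
    (∀ {A B : C} (l : A ⟶ B), L l → UniqueLift l r) → R r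

/-- A modality: a factorization system whose left class is stable under base
change. -/
structure Modality (C : Type u) [Category.{v} C] extends OrthFactSystem C where
  l_stable : ∀ {P X Y Z : C} (fst : P ⟶ X) (snd : P ⟶ Y) (f : X ⟶ Z) (l : Y ⟶ Z),
    IsPullback fst snd f l → L l → L fst

/-- `L` is closed under composition. -/
lemma OrthFactSystem.L_comp (fs : OrthFactSystem C) {X Y Z : C} (f : X ⟶ Y) (g : Y ⟶ Z)
    (hf : fs.L f) (hg : fs.L g) : fs.L (f ≫ g) := by
  refine fs.mem_L _ (fun r hr u v huv => ?_)
  obtain ⟨d₁, ⟨hd₁₁, hd₁₂⟩, hd₁u⟩ := fs.lift f r hf hr u (g ≫ v)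
    (by rw [huv, Category.assoc])
  obtain ⟨d₂, ⟨hd₂₁, hd₂₂⟩, hd₂u⟩ := fs.lift g r hg hr d₁ v hd₁₂
  refine ⟨d₂, ⟨by rw [Category.assoc, hd₂₁, hd₁₁], hd₂₂⟩, fun d' ⟨h1, h2⟩ => ?_⟩
  have : g ≫ d' = d₁ := hd₁u (g ≫ d')
    ⟨by rw [← Category.assoc]; exact h1, by rw [Category.assoc, h2]⟩
  exact hd₂u d' ⟨this, h2⟩

/-- left cancellation for `L`. -/
lemma OrthFactSystem.L_cancel (fs : OrthFactSystem C) {X Y Z : C} (f : X ⟶ Y) (g : Y ⟶ Z)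
    (hf : fs.L f) (hfg : fs.L (f ≫ g)) : fs.L g := by
  refine fs.mem_L _ (fun r hr u v huv => ?_)
  obtain ⟨d, ⟨hd₁, hd₂⟩, hdu⟩ := fs.lift (f ≫ g) r hfg hr (f ≫ u) v
    (by rw [Category.assoc, huv, ← Category.assoc])
  have key : g ≫ d = u := by
    obtain ⟨e, _, heu⟩ := fs.lift f r hf hr (f ≫ u) (g ≫ v)
      (by rw [Category.assoc, huv, ← Category.assoc])
    have h1 : g ≫ d = e := heu (g ≫ d)
      ⟨by rw [← Category.assoc]; exact hd₁, by rw [Category.assoc, hd₂]⟩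
    have h2 : u = e := heu u ⟨rfl, huv⟩
    rw [h1, h2]
  refine ⟨d, ⟨key, hd₂⟩, fun d' ⟨h1, h2⟩ => ?_⟩
  exact hdu d' ⟨by rw [Category.assoc, h1], h2⟩

/-- right cancellation for `R`. -/
lemma OrthFactSystem.R_cancel (fs : OrthFactSystem C) {X Y Z : C} (f : X ⟶ Y) (g : Y ⟶ Z)
    (hg : fs.R g) (hfg : fs.R (f ≫ g)) : fs.R f := by
  refine fs.mem_R _ (fun l hl u v huv => ?_)
  obtain ⟨d, ⟨hd₁, hd₂⟩, hdu⟩ := fs.lift l (f ≫ g) hl hfg u (v ≫ g)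
    (by rw [← Category.assoc, huv, Category.assoc])
  have key : d ≫ f = v := by
    obtain ⟨e, _, heu⟩ := fs.lift l g hl hg (u ≫ f) (v ≫ g)
      (by rw [← Category.assoc, huv, Category.assoc])
    have h1 : d ≫ f = e := heu (d ≫ f)
      ⟨by rw [← Category.assoc, hd₁], by rw [Category.assoc]; exact hd₂⟩
    have h2 : v = e := heu v ⟨huv.symm, rfl⟩
    rw [h1, h2]
  refine ⟨d, ⟨hd₁, key⟩, fun d' ⟨h1, h2⟩ => ?_⟩
  exact hdu d' ⟨h1, by rw [← Category.assoc, h2]⟩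

/-- `R` is stable under base change. -/
lemma OrthFactSystem.R_pullback (fs : OrthFactSystem C) {P X Y Z : C}
    {p₁ : P ⟶ X} {p₂ : P ⟶ Y} {f : X ⟶ Z} {r : Y ⟶ Z}
    (hp : IsPullback p₁ p₂ f r) (hr : fs.R r) : fs.R p₁ := by
  refine fs.mem_R _ (fun l hl u v huv => ?_)
  obtain ⟨d, ⟨hd₁, hd₂⟩, hdu⟩ := fs.lift l r hl hr (u ≫ p₂) (v ≫ f)
    (by rw [Category.assoc, ← hp.w, ← Category.assoc, huv, Category.assoc])
  refine ⟨hp.lift v d (by rw [hd₂]), ⟨?_, hp.lift_fst _ _ _⟩, fun d' ⟨h1, h2⟩ => ?_⟩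
  · apply hp.hom_ext
    · rw [Category.assoc, hp.lift_fst, huv]
    · rw [Category.assoc, hp.lift_snd, hd₁]
  · have : d' ≫ p₂ = d := hdu (d' ≫ p₂)
      ⟨by rw [← Category.assoc, h1], by
        rw [Category.assoc, ← hp.w, ← Category.assoc, h2]⟩
    apply hp.hom_ext
    · rw [hp.lift_fst, h2]
    · rw [hp.lift_snd, this]

/-- a map in both classes is an isomorphism. -/
lemma OrthFactSystem.isIso (fs : OrthFactSystem C) {X Y : C} (k : X ⟶ Y)
    (hL : fs.L k) (hR : fs.R k) : IsIso k := by
  obtain ⟨d, ⟨hd₁, hd₂⟩, _⟩ := fs.lift k k hL hR (𝟙 X) (𝟙 Y)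
    (by rw [Category.id_comp, Category.comp_id])
  exact ⟨d, hd₁, hd₂⟩

/-- For an `L`-cartesian square `α : f → g` (i.e. one whose cartesian gap map
lies in `L`), the square `R(α)` induced on the `(L, R)`-factorizations is
cartesian. -/
theorem stmt13 [HasPullbacks C] (fs : Modality C)
    {A B Cc D Zf Zg : C}
    (f : A ⟶ B) (g : Cc ⟶ D) (t : A ⟶ Cc) (b : B ⟶ D)
    (sq : f ≫ b = t ≫ g)
    (lf : A ⟶ Zf) (rf : Zf ⟶ B) (lg : Cc ⟶ Zg) (rg : Zg ⟶ D)
    (hlf : fs.L lf) (hrf : fs.R rf) (hf : lf ≫ rf = f)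
    (hlg : fs.L lg) (hrg : fs.R rg) (hg : lg ≫ rg = g)
    (m : Zf ⟶ Zg) (hm₁ : lf ≫ m = t ≫ lg) (hm₂ : m ≫ rg = rf ≫ b)
    (hgap : fs.L (pullback.lift f t sq : A ⟶ pullback b g)) :
    IsPullback m rf rg b := by
  -- W = pullback of rg and b
  set W := pullback rg b with hW
  have hWpb : IsPullback (pullback.fst rg b) (pullback.snd rg b) rg b :=
    IsPullback.of_hasPullback rg b
  -- the gap map of the square (m, rf)
  set k : Zf ⟶ W := pullback.lift m rf hm₂ with hk
  have hk₁ : k ≫ pullback.fst rg b = m := pullback.lift_fst _ _ _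
  have hk₂ : k ≫ pullback.snd rg b = rf := pullback.lift_snd _ _ _
  -- k is in R, by right cancellation: rf = k ≫ snd, and snd is a pullback of rg
  have hsndR : fs.R (pullback.snd rg b) :=
    fs.toOrthFactSystem.R_pullback hWpb.flip hrg
  have hkR : fs.R k :=
    fs.toOrthFactSystem.R_cancel k (pullback.snd rg b) hsndR (by rw [hk₂]; exact hrf)
  -- P = pullback of b and g; the map h : P ⟶ W is a pullback of lg, hence in L
  have hPpb : IsPullback (pullback.fst b g) (pullback.snd b g) b g :=
    IsPullback.of_hasPullback b g
  set h : pullback b g ⟶ W :=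
    pullback.lift (pullback.snd b g ≫ lg) (pullback.fst b g)
      (by rw [Category.assoc, hg, pullback.condition]) with hh
  have hh₁ : h ≫ pullback.fst rg b = pullback.snd b g ≫ lg := pullback.lift_fst _ _ _
  have hh₂ : h ≫ pullback.snd rg b = pullback.fst b g := pullback.lift_snd _ _ _
  have hbig : IsPullback (h ≫ pullback.snd rg b) (pullback.snd b g) b (lg ≫ rg) := by
    rw [hh₂, hg]; exact hPpb
  have hhpb : IsPullback h (pullback.snd b g) (pullback.fst rg b) lg :=
    IsPullback.of_right hbig hh₁ hWpb.flip
  have hhL : fs.L h := fs.l_stable h (pullback.snd b g) (pullback.fst rg b) lg hhpb hlg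
  -- lf ≫ k = gap ≫ h, which is in L
  have hcomp : lf ≫ k = pullback.lift f t sq ≫ h := by
    apply pullback.hom_ext
    · rw [Category.assoc, Category.assoc, hk₁, hh₁, ← Category.assoc,
        pullback.lift_snd, hm₁]
    · rw [Category.assoc, Category.assoc, hk₂, hh₂, pullback.lift_fst, hf]
  have hlfkL : fs.L (lf ≫ k) := by
    rw [hcomp]
    exact fs.toOrthFactSystem.L_comp _ _ hgap hhL
  have hkL : fs.L k := fs.toOrthFactSystem.L_cancel lf k hlf hlfkL
  have : IsIso k := fs.toOrthFactSystem.isIso k hkL hkR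
  exact IsPullback.of_iso_pullback ⟨hm₂⟩ (asIso k) hk₁ hk₂
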